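/- arXiv:1206.5359 — 2 statements merged into one kernel-verified Lean document; each statement's English description precedes it below -/
import Mathlib

section
/- Let A ⊆ ℕ. If for every a ∉ A there exists b ∈ A with b < a such that no pair x, y ∈ A satisfies y − x = a − b, then there exists a subtraction set S ⊆ ℕ₊ such that A is exactly the set of P-positions of the subtraction game with subtraction set S. -/
/-! Take as subtraction set the set of positive integers that are not differences of two elements
of `A`. Then no move leads from `A` into `A`, and from `a ∉ A` the move `a - b` given by the
hypothesis leads to `b ∈ A`; a set with these two properties is the set of P-positions. -/

/-- P-positions of the subtraction game with subtraction set `S`. -/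
def subP (S : Set ℕ) : ℕ → Prop
  | x => ∀ s, s ∈ S → ∀ _ : 0 < s, ∀ _ : s ≤ x, ¬ subP S (x - s)
termination_by x => x
decreasing_by all_goals omega

theorem subP_iff (S : Set ℕ) (x : ℕ) :
    subP S x ↔ ∀ s ∈ S, 0 < s → s ≤ x → ¬ subP S (x - s) := by
  rw [subP]

theorem mem_iff_subP_of_forall_mem_iff {S A : Set ℕ}
    (hA : ∀ x, x ∈ A ↔ ∀ s ∈ S, 0 < s → s ≤ x → x - s ∉ A) (x : ℕ) : x ∈ A ↔ subP S x := by
  induction x using Nat.strong_induction_on with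
  | _ x ih =>
    rw [hA, subP_iff]
    refine forall₂_congr fun s _ => imp_congr_right fun _ => imp_congr_right fun _ => ?_
    rw [ih (x - s) (by omega)]

def nonDifferences (A : Set ℕ) : Set ℕ :=
  {d | 0 < d ∧ ¬ ∃ x ∈ A, ∃ y ∈ A, x + d = y}

theorem mem_iff_forall_nonDifferences {A : Set ℕ}
    (h : ∀ a ∉ A, ∃ b ∈ A, b < a ∧ ¬ ∃ x ∈ A, ∃ y ∈ A, x + (a - b) = y) (x : ℕ) :
    x ∈ A ↔ ∀ s ∈ nonDifferences A, 0 < s → s ≤ x → x - s ∉ A := by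
  constructor
  · rintro hx s ⟨-, hs⟩ - hsx hxs
    exact hs ⟨x - s, hxs, x, hx, by omega⟩
  · intro hmoves
    by_contra hx
    obtain ⟨b, hb, hbx, hnodiff⟩ := h x hx
    refine hmoves (x - b) ⟨by omega, hnodiff⟩ (by omega) (by omega) ?_
    rwa [Nat.sub_sub_self hbx.le]

/-- If for every `a ∉ A` there is `b ∈ A`, `b < a`, such that no `x, y ∈ A` satisfy
`y - x = a - b`, then `A` is the set of P-positions of some subtraction game. -/
theorem exists_subtraction_game (A : Set ℕ)
    (h : ∀ a ∉ A, ∃ b ∈ A, b < a ∧ ¬ ∃ x ∈ A, ∃ y ∈ A, x + (a - b) = y) :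
    ∃ S : Set ℕ, (∀ s ∈ S, 0 < s) ∧ (∀ x, x ∈ A ↔ subP S x) :=
  ⟨nonDifferences A, fun _ hs => hs.1,
    mem_iff_subP_of_forall_mem_iff (mem_iff_forall_nonDifferences h)⟩
end

section
/- There is no invariant comply-number game whose set of P-positions is the greedy set avoiding x + z = 3y (with terminal position heap-size 1): if {1} ∈ S is forced (since 2 must have a move to 1 and the only option less than 2 is subtracting 1), then the move set {1} connects the P-positions 4 and 3, a contradiction. -/
/-!
If 2 is an N-position, some move set forces the move `2 → 1`, so all its positive entries equal 1.
By invariance the same set is applicable at every heap size `x ≥ 2` and only allows the move to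
`x - 1`; hence two consecutive heap sizes cannot both be P-positions. But 3 and 4 both belong to
the greedy set while 2 does not.
-/

/-- The greedy set avoiding solutions of `x + z = 3 * y`, starting from 1 (terminal
heap-size 1).  It begins 1, 3, 4, 7, 10, ... -/
def greedyC : ℕ → Prop
  | n => 1 ≤ n ∧
      ¬ ∃ a, ∃ _ : a < n, ∃ b, ∃ _ : b < n, greedyC a ∧ greedyC b ∧
        (a + b = 3 * n ∨ a + n = 3 * b ∨ n + n = 3 * a)
termination_by n => n
decreasing_by all_goals omega

/-- P-positions of the comply-number game played on heap sizes `≥ 1` (terminal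
position is heap-size 1): a move set `s ∈ S` is applicable at `x` iff every option
`x - i` still has size at least 1. -/
def complyNumP1 (S : Set (Finset ℕ)) : ℕ → Prop
  | x => ∀ s, s ∈ S → (∀ i ∈ s, i + 1 ≤ x) →
      ∃ i, ∃ _ : i ∈ s, ∃ _ : 0 < i, ∃ _ : i + 1 ≤ x, ¬ complyNumP1 S (x - i)
termination_by x => x
decreasing_by all_goals omega

theorem not_complyNumP1_sub_one {S : Set (Finset ℕ)} (h2 : ¬ complyNumP1 S 2) {x : ℕ}
    (hx : 2 ≤ x) (hxP : complyNumP1 S x) : ¬ complyNumP1 S (x - 1) := by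
  rw [complyNumP1] at h2
  push Not at h2
  obtain ⟨s, hsS, hs_le_one, hs_forced⟩ := h2
  rw [complyNumP1] at hxP
  obtain ⟨i, his, hipos, -, hxi⟩ := hxP s hsS fun i hi => by have := hs_le_one i hi; omega
  obtain rfl : i = 1 := by have := hs_le_one i his; omega
  exact hxi

theorem one_le_of_greedyC {n : ℕ} (h : greedyC n) : 1 ≤ n := by
  rw [greedyC] at h
  exact h.1

theorem greedyC_one : greedyC 1 := by
  rw [greedyC]
  refine ⟨le_rfl, ?_⟩
  rintro ⟨a, ha, b, -, ga, -⟩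
  exact absurd (one_le_of_greedyC ga) (by omega)

theorem not_greedyC_two : ¬ greedyC 2 := by
  rw [greedyC]
  rintro ⟨-, h⟩
  exact h ⟨1, by omega, 1, by omega, greedyC_one, greedyC_one, by omega⟩

theorem eq_one_or_eq_three_of_greedyC {n : ℕ} (h : greedyC n) (hn : n < 4) : n = 1 ∨ n = 3 := by
  have := one_le_of_greedyC h
  interval_cases n
  · exact .inl rfl
  · exact absurd h not_greedyC_two
  · exact .inr rfl

theorem greedyC_three : greedyC 3 := by
  rw [greedyC]
  refine ⟨by omega, ?_⟩
  rintro ⟨a, ha, b, hb, ga, gb, h⟩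
  rcases eq_one_or_eq_three_of_greedyC ga (by omega) with rfl | rfl <;>
    rcases eq_one_or_eq_three_of_greedyC gb (by omega) with rfl | rfl <;> omega

theorem greedyC_four : greedyC 4 := by
  rw [greedyC]
  refine ⟨by omega, ?_⟩
  rintro ⟨a, ha, b, hb, ga, gb, h⟩
  rcases eq_one_or_eq_three_of_greedyC ga (by omega) with rfl | rfl <;>
    rcases eq_one_or_eq_three_of_greedyC gb (by omega) with rfl | rfl <;> omega

/-- There is no invariant comply-number game (with terminal position heap-size 1)
whose set of P-positions is the greedy set avoiding `x + z = 3y`. -/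
theorem no_invariant_comply_game_for_greedyC :
    ¬ ∃ S : Set (Finset ℕ), (∀ s ∈ S, s.Nonempty) ∧ (∀ s ∈ S, ∀ i ∈ s, 0 < i) ∧
      (∀ x : ℕ, 1 ≤ x → (complyNumP1 S x ↔ greedyC x)) := by
  rintro ⟨S, -, -, hP⟩
  have h2 : ¬ complyNumP1 S 2 := fun h => not_greedyC_two ((hP 2 (by omega)).1 h)
  exact not_complyNumP1_sub_one h2 (by omega) ((hP 4 (by omega)).2 greedyC_four)
    ((hP 3 (by omega)).2 greedyC_three)
end
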